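/- arXiv:2102.10611 — 3 statements merged into one kernel-verified Lean document; each statement's English description precedes it below -/
import Mathlib

section
/- Let X be a proper geodesic metric space with basepoint x₀, and let γ be an isometry of X. Define |γ|_X = d_X(γx₀, x₀) and the stable translation length |γ|_{X,∞} = lim_{n→∞} d_X(γⁿx₀, x₀)/n. Then there exists a sequence of integers (m_i) such that 2·lim_{i→∞} ⟨γ^{m_i}x₀, γ⁻¹x₀⟩_{x₀} ≥ |γ|_X − |γ|_{X,∞}, where ⟨x,y⟩_{x₀} = ½(d(x,x₀) + d(y,x₀) − d(x,y)) is the Gromov product. -/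
open Filter Topology

/-- For an isometry `γ` of a proper geodesic metric space `X` with basepoint `x₀`,
with stable translation length `L`, there is a sequence of integers `(m i)` such that
`2 · lim_i ⟨γ^{m i} x₀, γ⁻¹ x₀⟩_{x₀} ≥ dist (γ x₀) x₀ − L`. -/
theorem stmt0 {X : Type*} [MetricSpace X] [ProperSpace X]
    (hgeo : ∀ x y : X, ∀ t ∈ Set.Icc (0:ℝ) 1, ∃ z : X,
      dist x z = t * dist x y ∧ dist z y = (1 - t) * dist x y)
    (x₀ : X) (γ : X ≃ᵢ X) (L : ℝ)
    (hL : Tendsto (fun n : ℕ => dist ((⇑γ)^[n] x₀) x₀ / n) atTop (nhds L)) :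
    ∃ (m : ℕ → ℕ) (l : ℝ),
      Tendsto (fun i : ℕ =>
          (dist ((⇑γ)^[m i] x₀) x₀ + dist (γ.symm x₀) x₀
            - dist ((⇑γ)^[m i] x₀) (γ.symm x₀)) / 2) atTop (nhds l) ∧
      dist (γ x₀) x₀ - L ≤ 2 * l := by
  classical
  set a : ℕ → ℝ := fun n => dist ((⇑γ)^[n] x₀) x₀ with ha
  set D : ℝ := dist (γ x₀) x₀ with hD
  have hiter : ∀ (n : ℕ) (x y : X), dist ((⇑γ)^[n] x) ((⇑γ)^[n] y) = dist x y := by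
    intro n
    induction n with
    | zero => intro x y; simp
    | succ k ih =>
      intro x y
      rw [Function.iterate_succ_apply', Function.iterate_succ_apply', γ.dist_eq, ih]
  have hDsym : dist (γ.symm x₀) x₀ = D := by
    calc dist (γ.symm x₀) x₀ = dist (γ (γ.symm x₀)) (γ x₀) := (γ.dist_eq _ _).symm
    _ = D := by rw [γ.apply_symm_apply, dist_comm]
  have hkey : ∀ n : ℕ, dist ((⇑γ)^[n] x₀) (γ.symm x₀) = a (n + 1) := by
    intro n
    calc dist ((⇑γ)^[n] x₀) (γ.symm x₀)
        = dist (γ ((⇑γ)^[n] x₀)) (γ (γ.symm x₀)) := (γ.dist_eq _ _).symm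
      _ = a (n + 1) := by
          rw [γ.apply_symm_apply, ha]
          simp only [Function.iterate_succ_apply']
  have hstepdist : ∀ n : ℕ, dist ((⇑γ)^[n + 1] x₀) ((⇑γ)^[n] x₀) = D := by
    intro n
    rw [Function.iterate_succ_apply, hiter, hD]
  set F : ℕ → ℝ := fun n => (a n + D - a (n + 1)) / 2 with hF
  have hub : ∀ n, a (n + 1) ≤ a n + D := by
    intro n
    have := dist_triangle ((⇑γ)^[n + 1] x₀) ((⇑γ)^[n] x₀) x₀
    rw [hstepdist] at this
    simpa [ha, add_comm] using this
  have hlb : ∀ n, a n ≤ a (n + 1) + D := by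
    intro n
    have := dist_triangle ((⇑γ)^[n] x₀) ((⇑γ)^[n + 1] x₀) x₀
    rw [dist_comm ((⇑γ)^[n] x₀) ((⇑γ)^[n + 1] x₀), hstepdist] at this
    simpa [ha, add_comm] using this
  have hF0 : ∀ n, 0 ≤ F n := fun n => by have := hub n; simp only [hF]; linarith
  have hFD : ∀ n, F n ≤ D := fun n => by have := hlb n; simp only [hF]; linarith
  have hfreq : ∀ ε : ℝ, 0 < ε → ∃ n, (D - L) / 2 - ε ≤ F n := by
    intro ε hε
    by_contra h
    push_neg at h
    have hstep' : ∀ n, a n + (L + 2 * ε) ≤ a (n + 1) := by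
      intro n
      have := h n
      simp only [hF] at this
      linarith
    have ha0 : a 0 = 0 := by simp [ha]
    have hind : ∀ k : ℕ, (k : ℝ) * (L + 2 * ε) ≤ a k := by
      intro k
      induction k with
      | zero => simp [ha0]
      | succ j ih =>
        have := hstep' j
        push_cast
        linarith
    have hge : L + 2 * ε ≤ L := by
      refine ge_of_tendsto hL ?_
      filter_upwards [eventually_ge_atTop 1] with k hk
      have hkpos : (0 : ℝ) < (k : ℝ) := by exact_mod_cast hk
      rw [le_div_iff₀ hkpos]
      have := hind k
      nlinarith
    linarith
  choose n hn using fun i : ℕ => hfreq (1 / ((i : ℝ) + 1)) (by positivity)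
  have hmem : ∀ i, F (n i) ∈ Set.Icc (0 : ℝ) D := fun i => ⟨hF0 _, hFD _⟩
  obtain ⟨l, _, φ, hφ, htend⟩ :=
    tendsto_subseq_of_bounded (Metric.isBounded_Icc (0 : ℝ) D) hmem
  refine ⟨n ∘ φ, l, ?_, ?_⟩
  · refine htend.congr fun i => ?_
    simp only [Function.comp_apply, hF, hkey, hDsym, ha]
  · have hlow : Tendsto (fun i : ℕ => (D - L) / 2 - 1 / ((i : ℝ) + 1)) atTop
        (nhds ((D - L) / 2 - 0)) :=
      tendsto_const_nhds.sub tendsto_one_div_add_atTop_nhds_zero_nat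
    have hle : (D - L) / 2 - 0 ≤ l := by
      refine le_of_tendsto_of_tendsto' hlow htend fun i => ?_
      have h1 : (D - L) / 2 - 1 / ((φ i : ℝ) + 1) ≤ F (n (φ i)) := hn (φ i)
      have h2 : 1 / ((φ i : ℝ) + 1) ≤ 1 / ((i : ℝ) + 1) := by
        apply one_div_le_one_div_of_le (by positivity)
        have hile : i ≤ φ i := hφ.le_apply
        have := (Nat.cast_le (α := ℝ)).2 hile
        linarith
      simp only [Function.comp_apply]
      linarith
    linarith
end

section
/- Let A, B ∈ GL(d,ℝ) satisfy σ_p(A) > σ_{p+1}(A) and σ_p(AB) > σ_{p+1}(AB). Then the distance in the Grassmannian satisfies d(B·U_p(A'), U_p(BA')) ≤ (σ₁(B)/σ_d(B))·(σ_{p+1}(A')/σ_p(A')) where A' = A, i.e., d(B·U_p(A), U_p(BA)) ≤ (σ₁/σ_d)(B)·(σ_{p+1}/σ_p)(A). -/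
open Filter Topology


/-- The `i`-th largest singular value (1-based) of a real `d × d` matrix: the `i`-th largest
square root of an eigenvalue of `Aᴴ * A`. -/
noncomputable def sval {d : ℕ} (M : Matrix (Fin d) (Fin d) ℝ) (i : ℕ) : ℝ :=
  ((List.ofFn fun j =>
      Real.sqrt ((show (M.transpose * M).IsHermitian by
        simpa [Matrix.conjTranspose_eq_transpose_of_trivial] using
          Matrix.isHermitian_conjTranspose_mul_self M).eigenvalues j)).insertionSort
    (· ≥ ·)).getD (i - 1) 0

/-- The modulus of the `i`-th largest (by modulus, 1-based, with multiplicity) complex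
eigenvalue of a real `d × d` matrix. -/
noncomputable def eigMod {d : ℕ} (M : Matrix (Fin d) (Fin d) ℝ) (i : ℕ) : ℝ :=
  (((M.map (fun x => (x : ℂ))).charpoly.roots.map (fun z => ‖z‖)).sort
    (· ≤ ·)).getD (d - i) 0

/-- The span of the columns of `M` indexed by `s`, as a subspace of Euclidean space. -/
noncomputable def colSpan {d : ℕ} (M : Matrix (Fin d) (Fin d) ℝ) (s : Set (Fin d)) :
    Submodule ℝ (EuclideanSpace ℝ (Fin d)) :=
  Submodule.span ℝ ((fun j => (WithLp.equiv 2 (Fin d → ℝ)).symm (M.transpose j)) '' s)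

/-- The sine of the minimal angle between two subspaces: the infimum over unit vectors `v ∈ V`
of the distance from `v` to `W`. -/
noncomputable def sinAngle {d : ℕ} (V W : Submodule ℝ (EuclideanSpace ℝ (Fin d))) : ℝ :=
  sInf ((fun v => Metric.infDist v (W : Set (EuclideanSpace ℝ (Fin d)))) ''
    {v : EuclideanSpace ℝ (Fin d) | v ∈ V ∧ ‖v‖ = 1})

/-- Distance between subspaces of Euclidean space: the supremum over unit vectors `u ∈ P` of the
distance from `u` to `Q`. -/
noncomputable def grDist {d : ℕ} (P Q : Submodule ℝ (EuclideanSpace ℝ (Fin d))) : ℝ :=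
  sSup ((fun u => Metric.infDist u (Q : Set (EuclideanSpace ℝ (Fin d)))) ''
    {u : EuclideanSpace ℝ (Fin d) | u ∈ P ∧ ‖u‖ = 1})

/-!
Write a unit vector of `B · U_p(A)` as `u = BAx` with `Ax ∈ U_p(A)`. Its distance to `U_p(BA)`
is at most the length of its component along the last `d - p` left singular vectors of `BA`,
hence at most `σ_{p+1}(BA) |x|`. Because `Ax ∈ U_p(A)` we have `σ_p(A) |x| ≤ |Ax|`, and
`σ_d(B) |Ax| ≤ |u| = 1`. Finally `σ_{p+1}(BA) ≤ σ_1(B) σ_{p+1}(A)`: by a dimension count some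
nonzero vector is stretched by at most `σ_{p+1}(A)` under `A` and by at least `σ_{p+1}(BA)`
under `BA`.
-/

open Matrix

namespace Matrix

variable {n R : Type*} [Fintype n] [DecidableEq n] [CommRing R]

theorem dotProduct_mulVec_mulVec_of_mem_orthogonalGroup {K : Matrix n n R}
    (hK : K ∈ orthogonalGroup n R) (v w : n → R) :
    (K *ᵥ v) ⬝ᵥ (K *ᵥ w) = v ⬝ᵥ w := by
  rw [dotProduct_mulVec, ← mulVec_transpose, mulVec_mulVec, (mem_orthogonalGroup_iff' n R).mp hK,
    one_mulVec]

theorem sum_sq_mulVec_of_mem_orthogonalGroup {L : Matrix n n R}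
    (hL : L ∈ orthogonalGroup n R) (v : n → R) : ∑ j, (L *ᵥ v) j ^ 2 = v ⬝ᵥ v := by
  rw [← dotProduct_mulVec_mulVec_of_mem_orthogonalGroup hL]
  simp only [dotProduct, sq]

theorem exists_ne_zero_mulVec_apply_eq_zero {𝕜 : Type*} [Field 𝕜] {d p : ℕ} (hp : p < d)
    (L L' : Matrix (Fin d) (Fin d) 𝕜) :
    ∃ v ≠ 0, (∀ j : Fin d, (j : ℕ) < p → (L *ᵥ v) j = 0) ∧
      ∀ j : Fin d, p < (j : ℕ) → (L' *ᵥ v) j = 0 := by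
  let N : Matrix {j : Fin d // j ≠ ⟨p, hp⟩} (Fin d) 𝕜 :=
    of fun j => if (j : ℕ) < p then L j else L' j
  have hker : LinearMap.ker N.mulVecLin ≠ ⊥ := by
    refine LinearMap.ker_ne_bot_of_finrank_lt ?_
    simp only [Module.finrank_fintype_fun_eq_card, Fintype.card_subtype_compl, Fintype.card_fin,
      Fintype.card_unique]
    omega
  obtain ⟨v, hv, hv0⟩ := Submodule.exists_mem_ne_zero_of_ne_bot hker
  have hNv (j : Fin d) (hj : (j : ℕ) ≠ p) : (N *ᵥ v) ⟨j, fun h => hj (by simp [h])⟩ = 0 :=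
    congrFun (LinearMap.mem_ker.mp hv) _
  refine ⟨v, hv0, fun j hj => ?_, fun j hj => ?_⟩
  · simpa [N, mulVec, hj] using hNv j hj.ne
  · simpa [N, mulVec, hj.not_gt] using hNv j hj.ne'

end Matrix

section SingularValues

variable {d : ℕ}

theorem isHermitian_transpose_mul_self {m n : Type*} [Fintype m] (M : Matrix m n ℝ) :
    (Mᵀ * M).IsHermitian := by
  simpa [conjTranspose_eq_transpose_of_trivial] using isHermitian_conjTranspose_mul_self M

noncomputable def svals (M : Matrix (Fin d) (Fin d) ℝ) : List ℝ :=
  (List.ofFn fun j => √((isHermitian_transpose_mul_self M).eigenvalues j)).insertionSort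
    (· ≥ ·)

variable {M : Matrix (Fin d) (Fin d) ℝ}

theorem sval_eq_getD (M : Matrix (Fin d) (Fin d) ℝ) (i : ℕ) :
    sval M i = (svals M).getD (i - 1) 0 := rfl

theorem length_svals (M : Matrix (Fin d) (Fin d) ℝ) : (svals M).length = d := by
  simp [svals]

theorem mem_svals {x : ℝ} :
    x ∈ svals M ↔ ∃ j, √((isHermitian_transpose_mul_self M).eigenvalues j) = x := by
  rw [svals, List.mem_insertionSort, List.mem_ofFn']
  rfl

theorem nonneg_of_mem_svals {x : ℝ} (hx : x ∈ svals M) : 0 ≤ x := by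
  obtain ⟨j, rfl⟩ := mem_svals.mp hx
  exact Real.sqrt_nonneg _

theorem sval_nonneg (M : Matrix (Fin d) (Fin d) ℝ) (i : ℕ) : 0 ≤ sval M i := by
  rw [sval_eq_getD]
  rcases lt_or_ge (i - 1) (svals M).length with hi | hi
  · rw [List.getD_eq_getElem _ _ hi]
    exact nonneg_of_mem_svals (List.getElem_mem hi)
  · rw [List.getD_eq_default _ _ hi]

-- On all of `ℕ`: index `0` repeats index `1` (truncated subtraction) and indices past `d` give `0`.
theorem sval_antitone (M : Matrix (Fin d) (Fin d) ℝ) : Antitone (sval M) := by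
  intro i j hij
  rcases lt_or_ge (j - 1) (svals M).length with hj | hj
  · rw [sval_eq_getD, sval_eq_getD, List.getD_eq_getElem _ _ hj,
      List.getD_eq_getElem _ _ (by omega)]
    exact List.sortedGE_iff_getElem_ge_getElem_of_le.mp List.sortedGE_insertionSort (by omega)
  · rw [sval_eq_getD M j, List.getD_eq_default _ _ hj]
    exact sval_nonneg M i

theorem sval_mem_svals {i : ℕ} (hi1 : 1 ≤ i) (hid : i ≤ d) : sval M i ∈ svals M := by
  rw [sval_eq_getD, List.getD_eq_getElem _ _ (by rw [length_svals]; omega)]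
  exact List.getElem_mem _

theorem exists_sval_eq_of_mem_svals {x : ℝ} (hx : x ∈ svals M) :
    ∃ i, 1 ≤ i ∧ i ≤ d ∧ sval M i = x := by
  obtain ⟨k, hk, rfl⟩ := List.getElem_of_mem hx
  refine ⟨k + 1, by omega, by rw [length_svals] at hk; omega, ?_⟩
  rw [sval_eq_getD, List.getD_eq_getElem _ _ (by omega)]
  rfl

theorem eigenvalues_transpose_mul_self_nonneg {m n : Type*} [Fintype m] [Fintype n]
    [DecidableEq n] (M : Matrix m n ℝ) (j : n) :
    0 ≤ (isHermitian_transpose_mul_self M).eigenvalues j :=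
  eigenvalues_conjTranspose_mul_self_nonneg M j

theorem sq_sval_last_le_eigenvalues (j : Fin d) :
    sval M d ^ 2 ≤ (isHermitian_transpose_mul_self M).eigenvalues j := by
  obtain ⟨i, -, hid, hi⟩ := exists_sval_eq_of_mem_svals (mem_svals.mpr ⟨j, rfl⟩)
  calc sval M d ^ 2 ≤ sval M i ^ 2 := by gcongr; exacts [sval_nonneg M d, sval_antitone M hid]
    _ = _ := by rw [hi, Real.sq_sqrt (eigenvalues_transpose_mul_self_nonneg M j)]

theorem eigenvalues_le_sq_sval_one (j : Fin d) :
    (isHermitian_transpose_mul_self M).eigenvalues j ≤ sval M 1 ^ 2 := by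
  obtain ⟨i, hi1, -, hi⟩ := exists_sval_eq_of_mem_svals (mem_svals.mpr ⟨j, rfl⟩)
  calc (isHermitian_transpose_mul_self M).eigenvalues j = sval M i ^ 2 := by
        rw [hi, Real.sq_sqrt (eigenvalues_transpose_mul_self_nonneg M j)]
    _ ≤ sval M 1 ^ 2 := by gcongr; exacts [sval_nonneg M i, sval_antitone M hi1]

theorem sval_pos (hM : IsUnit M.det) {i : ℕ} (hi1 : 1 ≤ i) (hid : i ≤ d) : 0 < sval M i := by
  obtain ⟨j, hj⟩ := mem_svals.mp (sval_mem_svals (M := M) hi1 hid)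
  rw [← hj, Real.sqrt_pos]
  have hpos : (Mᴴ * M).PosDef :=
    .conjTranspose_mul_self _ (mulVec_injective_iff_isUnit.mpr ((isUnit_iff_isUnit_det M).mpr hM))
  exact hpos.eigenvalues_pos j

end SingularValues

section Rayleigh

variable {d : ℕ}

theorem exists_dotProduct_self_eq_and_mulVec_eq_sum (M : Matrix (Fin d) (Fin d) ℝ)
    (v : Fin d → ℝ) :
    ∃ w : Fin d → ℝ, w ⬝ᵥ w = v ⬝ᵥ v ∧
      (M *ᵥ v) ⬝ᵥ (M *ᵥ v) =
        ∑ j, (isHermitian_transpose_mul_self M).eigenvalues j * w j ^ 2 := by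
  set hH := isHermitian_transpose_mul_self M
  set U : Matrix (Fin d) (Fin d) ℝ := (hH.eigenvectorUnitary : Matrix (Fin d) (Fin d) ℝ)
  have hU : Uᵀ ∈ orthogonalGroup (Fin d) ℝ := by
    rw [mem_orthogonalGroup_iff, transpose_transpose]
    exact (Unitary.mem_iff.mp hH.eigenvectorUnitary.2).1
  refine ⟨Uᵀ *ᵥ v, dotProduct_mulVec_mulVec_of_mem_orthogonalGroup hU v v, ?_⟩
  have hspec : Mᵀ * M = U * diagonal hH.eigenvalues * Uᵀ := by
    conv_lhs => rw [hH.spectral_theorem, Unitary.conjStarAlgAut_apply]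
    rfl
  calc (M *ᵥ v) ⬝ᵥ (M *ᵥ v) = v ⬝ᵥ ((Mᵀ * M) *ᵥ v) := by
        rw [← mulVec_mulVec, dotProduct_mulVec v, vecMul_transpose]
    _ = (Uᵀ *ᵥ v) ⬝ᵥ (diagonal hH.eigenvalues *ᵥ (Uᵀ *ᵥ v)) := by
        conv_lhs => rw [hspec, ← mulVec_mulVec, ← mulVec_mulVec, dotProduct_mulVec,
          ← mulVec_transpose]
    _ = _ := by
        simp only [dotProduct, mulVec_diagonal]
        exact Finset.sum_congr rfl fun j _ => by ring

theorem sq_sval_last_mul_le (M : Matrix (Fin d) (Fin d) ℝ) (v : Fin d → ℝ) :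
    sval M d ^ 2 * (v ⬝ᵥ v) ≤ (M *ᵥ v) ⬝ᵥ (M *ᵥ v) := by
  obtain ⟨w, hw, hMv⟩ := exists_dotProduct_self_eq_and_mulVec_eq_sum M v
  rw [hMv, ← hw]
  simp only [dotProduct, ← sq, Finset.mul_sum]
  gcongr with j
  exact sq_sval_last_le_eigenvalues j

theorem dotProduct_mulVec_self_le (M : Matrix (Fin d) (Fin d) ℝ) (v : Fin d → ℝ) :
    (M *ᵥ v) ⬝ᵥ (M *ᵥ v) ≤ sval M 1 ^ 2 * (v ⬝ᵥ v) := by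
  obtain ⟨w, hw, hMv⟩ := exists_dotProduct_self_eq_and_mulVec_eq_sum M v
  rw [hMv, ← hw]
  simp only [dotProduct, ← sq, Finset.mul_sum]
  gcongr with j
  exact eigenvalues_le_sq_sval_one j

end Rayleigh

theorem EuclideanSpace.norm_toLp_sq {n : Type*} [Fintype n] (v : n → ℝ) :
    ‖WithLp.toLp 2 v‖ ^ 2 = v ⬝ᵥ v := by
  rw [← real_inner_self_eq_norm_sq, EuclideanSpace.inner_toLp_toLp, star_trivial]

section ColumnSpan

variable {d : ℕ} {K : Matrix (Fin d) (Fin d) ℝ} {s : Set (Fin d)}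

theorem mem_colSpan_iff (hK : K ∈ orthogonalGroup (Fin d) ℝ) {x : EuclideanSpace ℝ (Fin d)} :
    x ∈ colSpan K s ↔ ∀ j ∉ s, (Kᵀ *ᵥ WithLp.ofLp x) j = 0 := by
  constructor
  · intro hx j hj
    induction hx using Submodule.span_induction with
    | mem x hx =>
      obtain ⟨i, hi, rfl⟩ := hx
      have hcol : (Kᵀ *ᵥ Kᵀ i) j = (Kᵀ * K) j i := by
        simp [mulVec, dotProduct, mul_apply]
      simpa [(mem_orthogonalGroup_iff' _ _).mp hK, one_apply,
        (ne_of_mem_of_not_mem hi hj).symm] using hcol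
    | zero => simp
    | add x z _ _ hx hz => simp [mulVec_add, hx, hz]
    | smul c x _ hx => simp [mulVec_smul, hx]
  · intro hx
    have hsum : WithLp.ofLp x = ∑ i, (Kᵀ *ᵥ WithLp.ofLp x) i • Kᵀ i := by
      conv_lhs => rw [← one_mulVec (WithLp.ofLp x), ← (mem_orthogonalGroup_iff _ _).mp hK,
        ← mulVec_mulVec, mulVec_eq_sum]
      simp only [op_smul_eq_smul]
    rw [← WithLp.toLp_ofLp (p := 2) x, hsum, WithLp.toLp_sum]
    refine Submodule.sum_mem _ fun i _ => ?_
    by_cases hi : i ∈ s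
    · rw [WithLp.toLp_smul]
      exact Submodule.smul_mem _ _ (Submodule.subset_span ⟨i, hi, rfl⟩)
    · simp [hx i hi]

theorem infDist_colSpan_sq_le (hK : K ∈ orthogonalGroup (Fin d) ℝ) (y : Fin d → ℝ) :
    Metric.infDist (WithLp.toLp 2 y) (colSpan K s) ^ 2 ≤
      sᶜ.indicator (Kᵀ *ᵥ y) ⬝ᵥ sᶜ.indicator (Kᵀ *ᵥ y) := by
  set z := Kᵀ *ᵥ y
  have hKK : Kᵀ * K = 1 := (mem_orthogonalGroup_iff' _ _).mp hK
  have hq : WithLp.toLp 2 (K *ᵥ s.indicator z) ∈ colSpan K s := by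
    rw [mem_colSpan_iff hK, mulVec_mulVec, hKK, one_mulVec]
    exact fun j hj => Set.indicator_of_notMem hj z
  have hyz : y = K *ᵥ s.indicator z + K *ᵥ sᶜ.indicator z := by
    rw [← mulVec_add, s.indicator_self_add_compl, mulVec_mulVec,
      (mem_orthogonalGroup_iff _ _).mp hK, one_mulVec]
  calc Metric.infDist (WithLp.toLp 2 y) (colSpan K s) ^ 2
      ≤ dist (WithLp.toLp 2 y) (WithLp.toLp 2 (K *ᵥ s.indicator z)) ^ 2 := by
        gcongr
        exacts [Metric.infDist_nonneg, Metric.infDist_le_dist_of_mem hq]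
    _ = sᶜ.indicator z ⬝ᵥ sᶜ.indicator z := by
        conv_lhs => rw [hyz]
        rw [dist_eq_norm, ← WithLp.toLp_sub, add_sub_cancel_left, EuclideanSpace.norm_toLp_sq,
          dotProduct_mulVec_mulVec_of_mem_orthogonalGroup hK]

end ColumnSpan

section SingularValueDecomposition

variable {d : ℕ}

-- The first `p` columns of `K` then span `U_p(M)`.
structure IsSVD (M K L : Matrix (Fin d) (Fin d) ℝ) : Prop where
  left_mem : K ∈ orthogonalGroup (Fin d) ℝ
  right_mem : L ∈ orthogonalGroup (Fin d) ℝ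
  eq_mul : M = K * diagonal (fun j : Fin d => sval M ((j : ℕ) + 1)) * L

namespace IsSVD

variable {M K L : Matrix (Fin d) (Fin d) ℝ}

theorem transpose_mulVec_mulVec (h : IsSVD M K L) (v : Fin d → ℝ) :
    Kᵀ *ᵥ (M *ᵥ v) = fun j : Fin d => sval M ((j : ℕ) + 1) * (L *ᵥ v) j := by
  conv_lhs => rw [h.eq_mul]
  rw [mulVec_mulVec, ← Matrix.mul_assoc, ← Matrix.mul_assoc,
    (mem_orthogonalGroup_iff' _ _).mp h.left_mem, Matrix.one_mul, ← mulVec_mulVec]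
  funext j
  exact mulVec_diagonal _ _ j

theorem dotProduct_mulVec_self_eq_sum (h : IsSVD M K L) (v : Fin d → ℝ) :
    (M *ᵥ v) ⬝ᵥ (M *ᵥ v) = ∑ j : Fin d, sval M ((j : ℕ) + 1) ^ 2 * (L *ᵥ v) j ^ 2 := by
  have hKt : Kᵀ ∈ orthogonalGroup (Fin d) ℝ := by
    rw [mem_orthogonalGroup_iff, transpose_transpose]
    exact (mem_orthogonalGroup_iff' _ _).mp h.left_mem
  rw [← dotProduct_mulVec_mulVec_of_mem_orthogonalGroup hKt, h.transpose_mulVec_mulVec]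
  simp only [dotProduct]
  exact Finset.sum_congr rfl fun j _ => by ring

theorem sq_sval_mul_le (h : IsSVD M K L) {v : Fin d → ℝ} {k : ℕ}
    (hv : ∀ j : Fin d, k ≤ j → (L *ᵥ v) j = 0) :
    sval M k ^ 2 * (v ⬝ᵥ v) ≤ (M *ᵥ v) ⬝ᵥ (M *ᵥ v) := by
  rw [← sum_sq_mulVec_of_mem_orthogonalGroup h.right_mem v, h.dotProduct_mulVec_self_eq_sum,
    Finset.mul_sum]
  refine Finset.sum_le_sum fun j _ => ?_
  by_cases hj : k ≤ j
  · simp [hv j hj]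
  · exact mul_le_mul_of_nonneg_right
      (pow_le_pow_left₀ (sval_nonneg M k) (sval_antitone M (by omega)) 2) (sq_nonneg _)

theorem dotProduct_mulVec_self_le (h : IsSVD M K L) {v : Fin d → ℝ} {k : ℕ}
    (hv : ∀ j : Fin d, (j : ℕ) < k → (L *ᵥ v) j = 0) :
    (M *ᵥ v) ⬝ᵥ (M *ᵥ v) ≤ sval M (k + 1) ^ 2 * (v ⬝ᵥ v) := by
  rw [← sum_sq_mulVec_of_mem_orthogonalGroup h.right_mem v, h.dotProduct_mulVec_self_eq_sum,
    Finset.mul_sum]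
  refine Finset.sum_le_sum fun j _ => ?_
  by_cases hj : (j : ℕ) < k
  · simp [hv j hj]
  · exact mul_le_mul_of_nonneg_right
      (pow_le_pow_left₀ (sval_nonneg M _) (sval_antitone M (by omega)) 2) (sq_nonneg _)

theorem mulVec_apply_eq_zero_of_mem_colSpan (h : IsSVD M K L) (hM : IsUnit M.det)
    {v : Fin d → ℝ} {s : Set (Fin d)} (hv : WithLp.toLp 2 (M *ᵥ v) ∈ colSpan K s) {j : Fin d}
    (hj : j ∉ s) : (L *ᵥ v) j = 0 := by
  have hzero := (mem_colSpan_iff h.left_mem).mp hv j hj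
  rw [WithLp.ofLp_toLp, h.transpose_mulVec_mulVec] at hzero
  exact (mul_eq_zero.mp hzero).resolve_left (sval_pos hM (by omega) (by omega)).ne'

theorem infDist_colSpan_sq_le (h : IsSVD M K L) (v : Fin d → ℝ) (p : ℕ) :
    Metric.infDist (WithLp.toLp 2 (M *ᵥ v)) (colSpan K {j | (j : ℕ) < p}) ^ 2 ≤
      sval M (p + 1) ^ 2 * (v ⬝ᵥ v) := by
  refine (_root_.infDist_colSpan_sq_le h.left_mem _).trans ?_
  rw [h.transpose_mulVec_mulVec, ← sum_sq_mulVec_of_mem_orthogonalGroup h.right_mem v,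
    Finset.mul_sum]
  simp only [dotProduct, ← sq]
  refine Finset.sum_le_sum fun j _ => ?_
  by_cases hj : (j : ℕ) < p
  · rw [Set.indicator_of_notMem (by simpa using hj), zero_pow two_ne_zero]
    positivity
  · rw [Set.indicator_of_mem (by simpa using hj), mul_pow]
    exact mul_le_mul_of_nonneg_right
      (pow_le_pow_left₀ (sval_nonneg M _) (sval_antitone M (by omega)) 2) (sq_nonneg _)

end IsSVD

theorem sval_mul_le_sval_one_mul {A B KA LA KBA LBA : Matrix (Fin d) (Fin d) ℝ}
    (hA : IsSVD A KA LA) (hBA : IsSVD (B * A) KBA LBA) {p : ℕ} (hp : p < d) :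
    sval (B * A) (p + 1) ≤ sval B 1 * sval A (p + 1) := by
  obtain ⟨v, hv0, hvA, hvBA⟩ := exists_ne_zero_mulVec_apply_eq_zero hp LA LBA
  have hsq :
      sval (B * A) (p + 1) ^ 2 * (v ⬝ᵥ v) ≤ (sval B 1 * sval A (p + 1)) ^ 2 * (v ⬝ᵥ v) :=
    calc sval (B * A) (p + 1) ^ 2 * (v ⬝ᵥ v)
        ≤ ((B * A) *ᵥ v) ⬝ᵥ ((B * A) *ᵥ v) :=
          hBA.sq_sval_mul_le fun j hj => hvBA j (by omega)
      _ = (B *ᵥ (A *ᵥ v)) ⬝ᵥ (B *ᵥ (A *ᵥ v)) := by rw [mulVec_mulVec]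
      _ ≤ sval B 1 ^ 2 * ((A *ᵥ v) ⬝ᵥ (A *ᵥ v)) := dotProduct_mulVec_self_le B _
      _ ≤ sval B 1 ^ 2 * (sval A (p + 1) ^ 2 * (v ⬝ᵥ v)) := by
          gcongr
          exact hA.dotProduct_mulVec_self_le hvA
      _ = (sval B 1 * sval A (p + 1)) ^ 2 * (v ⬝ᵥ v) := by ring
  exact (pow_le_pow_iff_left₀ (sval_nonneg _ _)
    (mul_nonneg (sval_nonneg _ _) (sval_nonneg _ _)) two_ne_zero).mp
    (le_of_mul_le_mul_right hsq (by simpa using dotProduct_star_self_pos_iff.mpr hv0))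

theorem infDist_colSpan_le_of_isSVD {p : ℕ} {A B KA LA KBA LBA : Matrix (Fin d) (Fin d) ℝ}
    (hA : IsSVD A KA LA) (hBA : IsSVD (B * A) KBA LBA) (hAdet : IsUnit A.det)
    (hBdet : IsUnit B.det) (hp1 : 1 ≤ p) (hpd : p < d) {x : Fin d → ℝ}
    (hx : WithLp.toLp 2 (A *ᵥ x) ∈ colSpan KA {j | (j : ℕ) < p})
    (hx1 : ‖WithLp.toLp 2 ((B * A) *ᵥ x)‖ = 1) :
    Metric.infDist (WithLp.toLp 2 ((B * A) *ᵥ x)) (colSpan KBA {j | (j : ℕ) < p}) ≤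
      (sval B 1 / sval B d) * (sval A (p + 1) / sval A p) := by
  set D := Metric.infDist (WithLp.toLp 2 ((B * A) *ᵥ x)) (colSpan KBA {j | (j : ℕ) < p})
  have hBd : 0 < sval B d := sval_pos hBdet (by omega) le_rfl
  have hAp : 0 < sval A p := sval_pos hAdet hp1 hpd.le
  have hD : D ^ 2 ≤ (sval B 1 * sval A (p + 1)) ^ 2 * (x ⬝ᵥ x) :=
    (hBA.infDist_colSpan_sq_le x p).trans <| by
      have hxx : 0 ≤ x ⬝ᵥ x := by simpa using dotProduct_star_self_nonneg x
      gcongr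
      exacts [sval_nonneg _ _, sval_mul_le_sval_one_mul hA hBA hpd]
  have hX : (sval B d * sval A p) ^ 2 * (x ⬝ᵥ x) ≤ 1 :=
    calc (sval B d * sval A p) ^ 2 * (x ⬝ᵥ x)
        = sval B d ^ 2 * (sval A p ^ 2 * (x ⬝ᵥ x)) := by ring
      _ ≤ sval B d ^ 2 * ((A *ᵥ x) ⬝ᵥ (A *ᵥ x)) := by
          gcongr
          exact hA.sq_sval_mul_le fun j hj =>
            hA.mulVec_apply_eq_zero_of_mem_colSpan hAdet hx (by simpa using hj)
      _ ≤ (B *ᵥ (A *ᵥ x)) ⬝ᵥ (B *ᵥ (A *ᵥ x)) := sq_sval_last_mul_le B _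
      _ = 1 := by rw [mulVec_mulVec, ← EuclideanSpace.norm_toLp_sq, hx1, one_pow]
  have hsq : (D * (sval B d * sval A p)) ^ 2 ≤ (sval B 1 * sval A (p + 1)) ^ 2 :=
    calc (D * (sval B d * sval A p)) ^ 2 = D ^ 2 * (sval B d * sval A p) ^ 2 := mul_pow ..
      _ ≤ (sval B 1 * sval A (p + 1)) ^ 2 * ((sval B d * sval A p) ^ 2 * (x ⬝ᵥ x)) := by
          rw [← mul_assoc, mul_right_comm _ _ (x ⬝ᵥ x)]
          gcongr
      _ ≤ (sval B 1 * sval A (p + 1)) ^ 2 := mul_le_of_le_one_right (sq_nonneg _) hX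
  rw [div_mul_div_comm, le_div_iff₀ (mul_pos hBd hAp)]
  exact (pow_le_pow_iff_left₀ (mul_nonneg Metric.infDist_nonneg (mul_pos hBd hAp).le)
    (mul_nonneg (sval_nonneg _ _) (sval_nonneg _ _)) two_ne_zero).mp hsq

end SingularValueDecomposition

theorem stmt6_general {d p : ℕ} (hp1 : 1 ≤ p) (hpd : p < d)
    (A B : Matrix (Fin d) (Fin d) ℝ) (hA : IsUnit A.det) (hB : IsUnit B.det)
    (KA LA KBA LBA : Matrix (Fin d) (Fin d) ℝ)
    (hKA : KA * KA.transpose = 1) (hLA : LA * LA.transpose = 1)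
    (hKBA : KBA * KBA.transpose = 1) (hLBA : LBA * LBA.transpose = 1)
    (hSVDA : A = KA * Matrix.diagonal (fun j : Fin d => sval A ((j : ℕ) + 1)) * LA)
    (hSVDBA : B * A = KBA * Matrix.diagonal (fun j : Fin d => sval (B * A) ((j : ℕ) + 1)) * LBA) :
    grDist ((colSpan KA {j : Fin d | (j : ℕ) < p}).map (Matrix.toEuclideanLin B))
        (colSpan KBA {j : Fin d | (j : ℕ) < p})
      ≤ (sval B 1 / sval B d) * (sval A (p + 1) / sval A p) := by
  have svdA : IsSVD A KA LA :=
    ⟨(mem_orthogonalGroup_iff _ _).mpr hKA, (mem_orthogonalGroup_iff _ _).mpr hLA, hSVDA⟩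
  have svdBA : IsSVD (B * A) KBA LBA :=
    ⟨(mem_orthogonalGroup_iff _ _).mpr hKBA, (mem_orthogonalGroup_iff _ _).mpr hLBA, hSVDBA⟩
  refine Real.sSup_le ?_ (mul_nonneg (div_nonneg (sval_nonneg _ _) (sval_nonneg _ _))
    (div_nonneg (sval_nonneg _ _) (sval_nonneg _ _)))
  rintro _ ⟨_, ⟨hu, hu1⟩, rfl⟩
  obtain ⟨w, hw, rfl⟩ := Submodule.mem_map.mp hu
  obtain ⟨x, rfl⟩ : ∃ x, WithLp.toLp 2 (A *ᵥ x) = w :=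
    ⟨A⁻¹ *ᵥ WithLp.ofLp w, by rw [mulVec_mulVec, mul_nonsing_inv _ hA, one_mulVec]⟩
  have hBAx : toEuclideanLin B (WithLp.toLp 2 (A *ᵥ x)) = WithLp.toLp 2 ((B * A) *ᵥ x) := by
    rw [← mulVec_mulVec]
    rfl
  rw [hBAx] at hu1 ⊢
  exact infDist_colSpan_le_of_isSVD svdA svdBA hA hB hp1 hpd hw hu1

/-- GGKW Lemma 5.8 / BPS Lemma A.5: if `σ_p(A) > σ_{p+1}(A)` and
`σ_p(BA) > σ_{p+1}(BA)`, then
`d(B · U_p(A), U_p(BA)) ≤ (σ₁/σ_d)(B) · (σ_{p+1}/σ_p)(A)`, where `U_p` is expressed via given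
singular value decompositions and `d` is the distance on the Grassmannian. -/
theorem stmt6 {d p : ℕ} (hp1 : 1 ≤ p) (hpd : p < d)
    (A B : Matrix (Fin d) (Fin d) ℝ) (hA : IsUnit A.det) (hB : IsUnit B.det)
    (hgapA : sval A (p + 1) < sval A p)
    (hgapBA : sval (B * A) (p + 1) < sval (B * A) p)
    (KA LA KBA LBA : Matrix (Fin d) (Fin d) ℝ)
    (hKA : KA * KA.transpose = 1) (hLA : LA * LA.transpose = 1)
    (hKBA : KBA * KBA.transpose = 1) (hLBA : LBA * LBA.transpose = 1)
    (hSVDA : A = KA * Matrix.diagonal (fun j : Fin d => sval A ((j : ℕ) + 1)) * LA)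
    (hSVDBA : B * A = KBA * Matrix.diagonal (fun j : Fin d => sval (B * A) ((j : ℕ) + 1)) * LBA) :
    grDist ((colSpan KA {j : Fin d | (j : ℕ) < p}).map (Matrix.toEuclideanLin B))
        (colSpan KBA {j : Fin d | (j : ℕ) < p})
      ≤ (sval B 1 / sval B d) * (sval A (p + 1) / sval A p) :=
  stmt6_general hp1 hpd A B hA hB KA LA KBA LBA hKA hLA hKBA hLBA hSVDA hSVDBA
end

section
/- Let Γ be a group with finite generating set S and word length |·|, and let f be a Floyd function. Define the Floyd metric d_f on Γ as the path metric where an edge between adjacent vertices g, h in the Cayley graph has length f(max{|g|,|h|}). Then for all g, h ∈ Γ, d_f(g,h) ≤ 4·⟨g,h⟩_e·f(⟨g,h⟩_e) + 2·∑_{k=⟨g,h⟩_e}^∞ f(k), where ⟨g,h⟩_e = ½(|g| + |h| − |g⁻¹h|) is the Gromov product at the identity (when ⟨g,h⟩_e is a positive integer). -/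
open Filter Topology

/-- A chain in the Cayley graph of `Γ` with respect to `S`: a list of group elements starting
at `g`, ending at `h`, with consecutive entries differing by a generator. -/
def IsCayleyChain {Γ : Type*} [Group Γ] (S : Set Γ) (g h : Γ) (l : List Γ) : Prop :=
  l.Chain' (fun a b => a⁻¹ * b ∈ S) ∧ l.head? = some g ∧ l.getLast? = some h

/-- Word length of `g` with respect to `S`: the least number of edges of a Cayley chain
from `1` to `g`. -/
noncomputable def wordLen {Γ : Type*} [Group Γ] (S : Set Γ) (g : Γ) : ℕ :=
  sInf {n : ℕ | ∃ l : List Γ, IsCayleyChain S 1 g l ∧ l.length = n + 1}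

section aux
variable {Γ : Type*} [Group Γ] {S : Set Γ}

lemma head?_scanl (g : Γ) (w : List Γ) : (List.scanl (· * ·) g w).head? = some g := by
  cases w <;> simp [List.scanl]

lemma chain_translate (x : Γ) {g h : Γ} {l : List Γ} (hl : IsCayleyChain S g h l) :
    IsCayleyChain S (x * g) (x * h) (l.map (x * ·)) := by
  obtain ⟨hc, hh, hlast⟩ := hl
  refine ⟨?_, ?_, ?_⟩
  · show List.IsChain _ _
    rw [List.isChain_map]
    refine hc.imp ?_
    intro a b hab
    simpa [mul_assoc] using hab
  · simp [hh]
  · simp [List.getLast?_map, hlast]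

lemma chain_scanl (g : Γ) (w : List Γ) (hw : ∀ s ∈ w, s ∈ S) :
    IsCayleyChain S g (g * w.prod) (List.scanl (· * ·) g w) := by
  induction w generalizing g with
  | nil => exact ⟨List.isChain_singleton _, by simp, by simp⟩
  | cons s t ih =>
    have hs : s ∈ S := hw s (by simp)
    have ht : ∀ x ∈ t, x ∈ S := fun x hx => hw x (by simp [hx])
    obtain ⟨hc, hh, hlast⟩ := ih (g * s) ht
    rw [List.scanl_cons]
    refine ⟨?_, by simp, ?_⟩
    · refine List.isChain_cons.mpr ⟨?_, hc⟩
      intro y hy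
      rw [head?_scanl] at hy
      cases hy
      simpa using hs
    · rw [List.getLast?_cons, hlast]
      simp [mul_assoc]

lemma word_of_chain {g h : Γ} {l : List Γ} (hl : IsCayleyChain S g h l) :
    ∃ w : List Γ, (∀ s ∈ w, s ∈ S) ∧ w.prod = g⁻¹ * h ∧ w.length + 1 = l.length := by
  induction l generalizing g with
  | nil => simpa using hl.2.1
  | cons a t ih =>
    obtain ⟨hc, hh, hlast⟩ := hl
    have hag : a = g := by simpa using hh
    subst hag
    cases t with
    | nil =>
      have : a = h := by simpa using hlast
      exact ⟨[], by simp, by simp [this], by simp⟩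
    | cons b t' =>
      have hab : a⁻¹ * b ∈ S := (List.isChain_cons_cons.mp hc).1
      have hc' : List.Chain' (fun a b => a⁻¹ * b ∈ S) (b :: t') := (List.isChain_cons_cons.mp hc).2
      have hlast' : (b :: t').getLast? = some h := by
        rwa [List.getLast?_cons_cons] at hlast
      obtain ⟨w, hwS, hwp, hwl⟩ := ih (g := b) ⟨hc', rfl, hlast'⟩
      refine ⟨(a⁻¹ * b) :: w, ?_, ?_, by simp [← hwl]⟩
      · intro s hs
        rcases List.mem_cons.mp hs with h1 | h2
        · rw [h1]; exact hab
        · exact hwS s h2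
      · simp [hwp, mul_assoc]
end aux
section aux2
variable {Γ : Type*} [Group Γ] {S : Set Γ}

lemma wordLen_le_word {w : List Γ} (hw : ∀ s ∈ w, s ∈ S) :
    wordLen S w.prod ≤ w.length := by
  have hc : IsCayleyChain S 1 w.prod (List.scanl (· * ·) 1 w) := by
    simpa using chain_scanl (S := S) 1 w hw
  exact Nat.sInf_le ⟨_, hc, by rw [List.length_scanl]⟩

lemma exists_word (hgen : Subgroup.closure S = ⊤) (hsymm : ∀ s ∈ S, s⁻¹ ∈ S) (g : Γ) :
    ∃ w : List Γ, (∀ s ∈ w, s ∈ S) ∧ w.prod = g := by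
  have hg : g ∈ Subgroup.closure S := by rw [hgen]; trivial
  induction hg using Subgroup.closure_induction with
  | mem x hx => exact ⟨[x], by simpa, by simp⟩
  | one => exact ⟨[], by simp, by simp⟩
  | mul x y hx hy ihx ihy =>
    obtain ⟨w1, h1, p1⟩ := ihx
    obtain ⟨w2, h2, p2⟩ := ihy
    refine ⟨w1 ++ w2, ?_, by simp [p1, p2]⟩
    intro s hs
    rcases List.mem_append.mp hs with h | h
    · exact h1 s h
    · exact h2 s h
  | inv x hx ihx =>
    obtain ⟨w, h1, p1⟩ := ihx
    refine ⟨(w.map (·⁻¹)).reverse, ?_, ?_⟩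
    · intro s hs
      rw [List.mem_reverse, List.mem_map] at hs
      obtain ⟨a, ha, rfl⟩ := hs
      exact hsymm a (h1 a ha)
    · rw [← List.prod_inv_reverse, p1]

lemma exists_min_word (hgen : Subgroup.closure S = ⊤) (hsymm : ∀ s ∈ S, s⁻¹ ∈ S) (g : Γ) :
    ∃ w : List Γ, (∀ s ∈ w, s ∈ S) ∧ w.prod = g ∧ w.length = wordLen S g := by
  obtain ⟨w0, hw0, hp0⟩ := exists_word hgen hsymm g
  have hne : {n : ℕ | ∃ l : List Γ, IsCayleyChain S 1 g l ∧ l.length = n + 1}.Nonempty := by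
    refine ⟨w0.length, List.scanl (· * ·) 1 w0, ?_, by rw [List.length_scanl]⟩
    simpa [hp0] using chain_scanl (S := S) 1 w0 hw0
  obtain ⟨l, hl, hlen⟩ := Nat.sInf_mem hne
  obtain ⟨w, hwS, hwp, hwl⟩ := word_of_chain hl
  refine ⟨w, hwS, by simpa using hwp, ?_⟩
  have : w.length + 1 = wordLen S g + 1 := by rw [hwl, hlen]; rfl
  omega

lemma wordLen_mul_le (hgen : Subgroup.closure S = ⊤) (hsymm : ∀ s ∈ S, s⁻¹ ∈ S) (x y : Γ) :
    wordLen S (x * y) ≤ wordLen S x + wordLen S y := by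
  obtain ⟨w1, h1, p1, l1⟩ := exists_min_word hgen hsymm x
  obtain ⟨w2, h2, p2, l2⟩ := exists_min_word hgen hsymm y
  have := wordLen_le_word (w := w1 ++ w2) (S := S) (by
    intro s hs
    rcases List.mem_append.mp hs with h | h
    · exact h1 s h
    · exact h2 s h)
  simpa [p1, p2, l1, l2] using this

lemma wordLen_inv (hgen : Subgroup.closure S = ⊤) (hsymm : ∀ s ∈ S, s⁻¹ ∈ S) (x : Γ) :
    wordLen S x⁻¹ = wordLen S x := by
  have key : ∀ z : Γ, wordLen S z⁻¹ ≤ wordLen S z := by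
    intro z
    obtain ⟨w, hwS, hwp, hwl⟩ := exists_min_word hgen hsymm z
    have := wordLen_le_word (w := (w.map (·⁻¹)).reverse) (S := S) (by
      intro s hs
      rw [List.mem_reverse, List.mem_map] at hs
      obtain ⟨a, ha, rfl⟩ := hs
      exact hsymm a (hwS a ha))
    rw [← List.prod_inv_reverse, hwp] at this
    simpa [hwl] using this
  refine le_antisymm (key x) ?_
  have := key x⁻¹
  simpa using this

end aux2

/-- The Floyd length of a chain: the sum over its edges `(a, b)` of `f (max |a| |b|)`. -/
noncomputable def floydLen {Γ : Type*} [Group Γ] (S : Set Γ) (f : ℕ → ℝ) (l : List Γ) : ℝ :=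
  ((l.zip l.tail).map (fun p => f (max (wordLen S p.1) (wordLen S p.2)))).sum

/-- The Floyd distance: the infimum of Floyd lengths of chains from `g` to `h`. -/
noncomputable def floydDist {Γ : Type*} [Group Γ] (S : Set Γ) (f : ℕ → ℝ) (g h : Γ) : ℝ :=
  sInf {r : ℝ | ∃ l : List Γ, IsCayleyChain S g h l ∧ r = floydLen S f l}

section aux3
variable {Γ : Type*} [Group Γ] {S : Set Γ} {f : ℕ → ℝ}

lemma floydLen_nonneg (hpos : ∀ n, 0 < f n) (l : List Γ) : 0 ≤ floydLen S f l := by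
  apply List.sum_nonneg
  intro x hx
  rw [List.mem_map] at hx
  obtain ⟨p, _, rfl⟩ := hx
  exact (hpos _).le

lemma floydDist_le (hpos : ∀ n, 0 < f n) {g h : Γ} {l : List Γ}
    (hl : IsCayleyChain S g h l) : floydDist S f g h ≤ floydLen S f l := by
  apply csInf_le
  · refine ⟨0, ?_⟩
    rintro r ⟨l', _, rfl⟩
    exact floydLen_nonneg hpos l'
  · exact ⟨l, hl, rfl⟩

lemma floydLen_cons_cons (a b : Γ) (t : List Γ) :
    floydLen S f (a :: b :: t) =
      f (max (wordLen S a) (wordLen S b)) + floydLen S f (b :: t) := by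
  simp [floydLen]

lemma floydLen_cons_scanl (a x : Γ) (t : List Γ) :
    floydLen S f (a :: List.scanl (· * ·) x t) =
      f (max (wordLen S a) (wordLen S x)) + floydLen S f (List.scanl (· * ·) x t) := by
  cases t with
  | nil => simp [floydLen, List.scanl]
  | cons s t' => rw [List.scanl_cons, floydLen_cons_cons]

lemma floydLen_scanl (g : Γ) (w : List Γ) :
    floydLen S f (List.scanl (· * ·) g w) =
      ∑ i ∈ Finset.range w.length,
        f (max (wordLen S (g * (w.take i).prod)) (wordLen S (g * (w.take (i + 1)).prod))) := by
  induction w generalizing g with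
  | nil => simp [floydLen, List.scanl]
  | cons s t ih =>
    rw [List.scanl_cons, floydLen_cons_scanl, ih (g * s),
      List.length_cons, Finset.sum_range_succ', add_comm]
    congr 1
    · apply Finset.sum_congr rfl
      intro i _
      simp [List.take_cons, mul_assoc]
    · simp
end aux3

/-- Karlsson: for a finitely generated group with symmetric generating set `S`
and Floyd function `f`, whenever the Gromov product `⟨g,h⟩_e` is a positive integer `N`,
`d_f(g,h) ≤ 4 N f(N) + 2 ∑_{k ≥ N} f(k)`. -/
theorem stmt12 {Γ : Type*} [Group Γ] (S : Set Γ) (hfin : S.Finite)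
    (hsymm : ∀ s ∈ S, s⁻¹ ∈ S) (hgen : Subgroup.closure S = ⊤)
    (f : ℕ → ℝ) (hpos : ∀ n, 0 < f n) (hsum : Summable f)
    (m : ℝ) (hm : 0 < m)
    (hratio : ∀ k : ℕ, 1 / m ≤ f (k + 1) / f k ∧ f (k + 1) / f k ≤ 1)
    (g h : Γ) (N : ℕ) (hN : 0 < N)
    (hgp : (N : ℝ) =
      ((wordLen S g : ℝ) + (wordLen S h : ℝ) - (wordLen S (g⁻¹ * h) : ℝ)) / 2) :
    floydDist S f g h ≤ 4 * N * f N + 2 * ∑' k : ℕ, f (N + k) := by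
  set a := wordLen S g with ha_def
  set b := wordLen S h with hb_def
  set c := wordLen S (g⁻¹ * h) with hc_def
  -- f is antitone
  have hanti : Antitone f := by
    refine antitone_nat_of_succ_le fun n => ?_
    have := (hratio n).2
    rwa [div_le_one (hpos n)] at this
  -- arithmetic relation
  have habc : a + b = c + 2 * N := by
    have h2 : (a : ℝ) + (b : ℝ) = (c : ℝ) + 2 * (N : ℝ) := by
      rw [hgp]; ring
    exact_mod_cast h2
  have htri1 : b ≤ a + c := by
    have := wordLen_mul_le hgen hsymm g (g⁻¹ * h)
    simpa using this
  have htri2 : a ≤ b + c := by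
    have := wordLen_mul_le hgen hsymm h (g⁻¹ * h)⁻¹
    rw [wordLen_inv hgen hsymm] at this
    simpa using this
  have hNa : N ≤ a := by omega
  have hNb : N ≤ b := by omega
  -- geodesic word for g⁻¹ h
  obtain ⟨w, hwS, hwp, hwl⟩ := exists_min_word hgen hsymm (g⁻¹ * h)
  -- the chain
  have hchain : IsCayleyChain S g h (List.scanl (· * ·) g w) := by
    have := chain_scanl g w hwS
    rwa [hwp, mul_inv_cancel_left] at this
  have hd : floydDist S f g h ≤ floydLen S f (List.scanl (· * ·) g w) :=
    floydDist_le hpos hchain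
  rw [floydLen_scanl, hwl] at hd
  -- summability facts
  have hsumN : Summable (fun k => f (N + k)) :=
    ((summable_nat_add_iff N).mpr hsum).congr (fun k => by rw [add_comm])
  have hsumN1 : Summable (fun k => f (N + 1 + k)) :=
    ((summable_nat_add_iff (N + 1)).mpr hsum).congr (fun k => by rw [add_comm])
  set T : ℝ := ∑' k : ℕ, f (N + 1 + k) with hT_def
  -- pointwise bound on the edges
  have key : ∀ i ∈ Finset.range c,
      f (max (wordLen S (g * (w.take i).prod)) (wordLen S (g * (w.take (i + 1)).prod)))
        ≤ (if i + N + 1 ≤ a then f (a - i) else f (2 * N + 1 + i - a)) := by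
    intro i hi
    rw [Finset.mem_range] at hi
    set u := wordLen S (g * (w.take i).prod) with hu_def
    set v := wordLen S (g * (w.take (i + 1)).prod) with hv_def
    have hu : a ≤ u + i := by
      have h1 : a ≤ u + wordLen S (w.take i).prod⁻¹ := by
        have := wordLen_mul_le hgen hsymm (g * (w.take i).prod) (w.take i).prod⁻¹
        simpa using this
      have h2 : wordLen S (w.take i).prod⁻¹ ≤ i := by
        rw [wordLen_inv hgen hsymm]
        calc wordLen S (w.take i).prod ≤ (w.take i).length :=
              wordLen_le_word (fun s hs => hwS s (List.mem_of_mem_take hs))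
          _ ≤ i := by simp [List.length_take]
      omega
    have hv : b ≤ v + (c - (i + 1)) := by
      have h1 : b ≤ v + wordLen S (w.drop (i + 1)).prod := by
        have := wordLen_mul_le hgen hsymm (g * (w.take (i + 1)).prod) (w.drop (i + 1)).prod
        rw [mul_assoc, List.prod_take_mul_prod_drop, hwp, mul_inv_cancel_left] at this
        exact this
      have h2 : wordLen S (w.drop (i + 1)).prod ≤ c - (i + 1) := by
        calc wordLen S (w.drop (i + 1)).prod ≤ (w.drop (i + 1)).length :=
              wordLen_le_word (fun s hs => hwS s (List.mem_of_mem_drop hs))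
          _ = c - (i + 1) := by rw [List.length_drop, hwl]
      omega
    by_cases hcase : i + N + 1 ≤ a
    · rw [if_pos hcase]
      calc f (max u v) ≤ f u := hanti (le_max_left u v)
        _ ≤ f (a - i) := hanti (by omega)
    · rw [if_neg hcase]
      calc f (max u v) ≤ f v := hanti (le_max_right u v)
        _ ≤ f (2 * N + 1 + i - a) := hanti (by omega)
  have hd2 : floydDist S f g h ≤
      ∑ i ∈ Finset.range c, (if i + N + 1 ≤ a then f (a - i) else f (2 * N + 1 + i - a)) :=
    hd.trans (Finset.sum_le_sum key)
  -- split the sum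
  have haNc : a - N ≤ c := by omega
  have hsplit : ∑ i ∈ Finset.range c,
        (if i + N + 1 ≤ a then f (a - i) else f (2 * N + 1 + i - a))
      = ∑ i ∈ Finset.range (a - N), f (a - i)
        + ∑ i ∈ Finset.Ico (a - N) c, f (2 * N + 1 + i - a) := by
    rw [Finset.range_eq_Ico, ← Finset.sum_Ico_consecutive _ (Nat.zero_le (a - N)) haNc]
    congr 1
    · rw [← Finset.range_eq_Ico]
      refine Finset.sum_congr rfl fun i hi => ?_
      rw [Finset.mem_range] at hi
      rw [if_pos (by omega)]
    · refine Finset.sum_congr rfl fun i hi => ?_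
      rw [Finset.mem_Ico] at hi
      rw [if_neg (by omega)]
  -- first sum
  have hfirst : ∑ i ∈ Finset.range (a - N), f (a - i) ≤ T := by
    have e1 : ∑ i ∈ Finset.range (a - N), f (a - i)
        = ∑ i ∈ Finset.range (a - N), f (N + 1 + i) := by
      rw [← Finset.sum_range_reflect (fun j => f (N + 1 + j)) (a - N)]
      refine Finset.sum_congr rfl fun i hi => ?_
      rw [Finset.mem_range] at hi
      congr 1
      omega
    rw [e1]
    exact Summable.sum_le_tsum _ (fun i _ => (hpos _).le) hsumN1
  -- second sum
  have hsecond : ∑ i ∈ Finset.Ico (a - N) c, f (2 * N + 1 + i - a) ≤ T := by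
    rw [Finset.sum_Ico_eq_sum_range]
    have e1 : ∑ i ∈ Finset.range (c - (a - N)), f (2 * N + 1 + (a - N + i) - a)
        = ∑ i ∈ Finset.range (c - (a - N)), f (N + 1 + i) := by
      refine Finset.sum_congr rfl fun i hi => ?_
      congr 1
      omega
    rw [e1]
    exact Summable.sum_le_tsum _ (fun i _ => (hpos _).le) hsumN1
  -- tail identity
  have htail : ∑' k : ℕ, f (N + k) = f N + T := by
    rw [Summable.tsum_eq_zero_add hsumN, hT_def]
    congr 1
    exact tsum_congr fun k => by congr 1; omega
  have hfN : 0 < f N := hpos N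
  have h4N : (0 : ℝ) ≤ 4 * N * f N := by positivity
  calc floydDist S f g h ≤ ∑ i ∈ Finset.range (a - N), f (a - i)
        + ∑ i ∈ Finset.Ico (a - N) c, f (2 * N + 1 + i - a) := by rw [← hsplit]; exact hd2
    _ ≤ T + T := add_le_add hfirst hsecond
    _ ≤ 4 * N * f N + 2 * ∑' k : ℕ, f (N + k) := by rw [htail]; linarith
end
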